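/- arXiv:2007.14966 — 2 statements merged into one kernel-verified Lean document; each statement's English description precedes it below -/
import Mathlib

section
/- Let N ≥ 1 be an integer, s > 0 real, let P_M be the Zipf distribution p(i;s,N) = 1/(i^s · H_{N,s}) on {1,…,N}, and for 1 ≤ k ≤ N let P_{M_k} be the top-k truncation of P_M, namely P_{M_k}(i) = 1/(i^s · H_{k,s}) for 1 ≤ i ≤ k. Then the cross-entropy of P_M with respect to P_{M_k} satisfies H(P_{M_k}, P_M) = (s / H_{k,s}) · Σ_{i=1}^k (log₂ i)/i^s + log₂ H_{N,s}. -/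
open Finset Real

/-- Cross-entropy of the Zipf model distribution with respect to its top-`k` truncation:
`H(P_{M_k}, P_M) = (s / H_{k,s}) * Σ_{i=1}^k (log₂ i)/i^s + log₂ H_{N,s}`. -/
theorem zipf_topk_cross_entropy (N : ℕ) (hN : 1 ≤ N) (s : ℝ) (hs : 0 < s)
    (HN : ℝ) (hHN : HN = ∑ i ∈ Finset.Icc 1 N, 1 / (i : ℝ) ^ s)
    (k : ℕ) (hk1 : 1 ≤ k) (hkN : k ≤ N)
    (Hk : ℝ) (hHk : Hk = ∑ i ∈ Finset.Icc 1 k, 1 / (i : ℝ) ^ s)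
    (pM : ℕ → ℝ) (hpM : ∀ i ∈ Finset.Icc 1 N, pM i = 1 / ((i : ℝ) ^ s * HN))
    (pMk : ℕ → ℝ) (hpMk : ∀ i ∈ Finset.Icc 1 k, pMk i = 1 / ((i : ℝ) ^ s * Hk)) :
    -(∑ i ∈ Finset.Icc 1 k, pMk i * Real.logb 2 (pM i)) =
      (s / Hk) * ∑ i ∈ Finset.Icc 1 k, Real.logb 2 i / (i : ℝ) ^ s
        + Real.logb 2 HN := by
  have hHkpos : 0 < Hk := by
    rw [hHk]
    apply Finset.sum_pos
    · intro i hi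
      have hi1 : 1 ≤ i := (Finset.mem_Icc.mp hi).1
      have : (0:ℝ) < (i:ℝ) := by exact_mod_cast hi1
      positivity
    · exact ⟨1, Finset.mem_Icc.mpr ⟨le_refl 1, hk1⟩⟩
  have hHNpos : 0 < HN := by
    rw [hHN]
    apply Finset.sum_pos
    · intro i hi
      have hi1 : 1 ≤ i := (Finset.mem_Icc.mp hi).1
      have : (0:ℝ) < (i:ℝ) := by exact_mod_cast hi1
      positivity
    · exact ⟨1, Finset.mem_Icc.mpr ⟨le_refl 1, hN⟩⟩
  have hlog2 : Real.log 2 ≠ 0 := by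
    have : (1:ℝ) < 2 := one_lt_two
    exact ne_of_gt (Real.log_pos this)
  have key : ∀ i ∈ Finset.Icc 1 k,
      -(pMk i * Real.logb 2 (pM i)) =
        (s / Hk) * (Real.logb 2 i / (i : ℝ) ^ s)
          + Real.logb 2 HN * ((1 / (i : ℝ) ^ s) / Hk) := by
    intro i hi
    have hi1 : 1 ≤ i := (Finset.mem_Icc.mp hi).1
    have hipos : (0:ℝ) < (i:ℝ) := by exact_mod_cast hi1
    have hispos : (0:ℝ) < (i:ℝ) ^ s := Real.rpow_pos_of_pos hipos s
    have hiN : i ∈ Finset.Icc 1 N :=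
      Finset.mem_Icc.mpr ⟨hi1, le_trans (Finset.mem_Icc.mp hi).2 hkN⟩
    rw [hpMk i hi, hpM i hiN]
    rw [Real.logb, Real.log_div one_ne_zero (by positivity),
      Real.log_one, Real.log_mul (ne_of_gt hispos) (ne_of_gt hHNpos),
      Real.log_rpow hipos, Real.logb, Real.logb]
    field_simp
    ring
  rw [neg_eq_iff_eq_neg, ← neg_neg (∑ i ∈ Finset.Icc 1 k, pMk i * Real.logb 2 (pM i))]
  congr 1
  rw [← Finset.sum_neg_distrib, Finset.sum_congr rfl key, Finset.sum_add_distrib,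
    ← Finset.mul_sum, ← Finset.mul_sum]
  congr 1
  rw [← Finset.sum_div, ← hHk, div_self (ne_of_gt hHkpos), mul_one]
end

section
/- Let s be a real number with 1 < s ≤ 1/ln 2, write ε = s − 1 > 0, let N ≥ k ≥ 3 be integers, let P_M be the Zipf distribution p(i;s,N) = 1/(i^s · H_{N,s}) on {1,…,N}, and let P_{M_k}(i) = 1/(i^s · H_{k,s}) for 1 ≤ i ≤ k be its top-k truncation. Define the constants a₁ = s·( (log₂ 2)/2^{1+ε} + (1/(ε·(ln 2)·3^ε))·(ln 3 + 1/ε) ), a₂ = s/(ε·ln 2), b₁ = s·( (log₂ 2)/2^{1+ε} + (log₂ 3)/3^{1+ε} + (1/(ε·(ln 2)·3^ε))·(ln 3 + 1/ε) ), and b₂ = s/(ε·ln 2). Then a₁/H_{k,s} − (a₂/(H_{k,s}·(k+1)^ε))·(ln(k+1) + 1/ε) ≤ H(P_{M_k}, P_M) − log₂ H_{N,s} ≤ b₁/H_{k,s} − (b₂/(H_{k,s}·k^ε))·(ln k + 1/ε). -/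
open Finset Real

noncomputable def Fz (ε x : ℝ) : ℝ := -((Real.log x + 1/ε) / (ε * x ^ ε))

lemma hasDerivAt_Fz {ε x : ℝ} (hε : 0 < ε) (hx : 0 < x) :
    HasDerivAt (Fz ε) (Real.log x / x ^ (1+ε)) x := by
  have h1 : HasDerivAt (fun y : ℝ => Real.log y + 1/ε) x⁻¹ x :=
    (Real.hasDerivAt_log hx.ne').add_const _
  have h2 : HasDerivAt (fun y : ℝ => y ^ (-ε)) (-ε * x ^ (-ε - 1)) x :=
    Real.hasDerivAt_rpow_const (Or.inl hx.ne')
  have h3 := ((h1.mul h2).const_mul (-(1/ε)))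
  have heq : -(1/ε) * (x⁻¹ * x ^ (-ε) + (Real.log x + 1/ε) * (-ε * x ^ (-ε - 1)))
      = Real.log x / x ^ (1+ε) := by
    have e1 : x ^ (-ε) = (x ^ ε)⁻¹ := Real.rpow_neg hx.le ε
    have e2 : x ^ (-ε - 1) = (x ^ ε)⁻¹ * x⁻¹ := by
      rw [show -ε - 1 = -ε + (-1) by ring, Real.rpow_add hx, e1, Real.rpow_neg_one]
    have e3 : x ^ (1+ε) = x * x ^ ε := by
      rw [Real.rpow_add hx, Real.rpow_one]
    have hxe : (0:ℝ) < x ^ ε := Real.rpow_pos_of_pos hx ε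
    rw [e1, e2, e3]
    field_simp
    ring
  rw [heq] at h3
  apply h3.congr_of_eventuallyEq
  filter_upwards [eventually_gt_nhds hx] with y hy
  have e1 : y ^ (-ε) = (y ^ ε)⁻¹ := Real.rpow_neg hy.le ε
  simp only [Fz, Pi.mul_apply, e1]
  field_simp

lemma fz_anti {ε : ℝ} (hε : 0 < ε) :
    AntitoneOn (fun x : ℝ => Real.log x / x ^ (1+ε)) (Set.Ici 3) := by
  have hd : ∀ x : ℝ, 0 < x → HasDerivAt (fun y : ℝ => Real.log y / y ^ (1+ε))
      ((x⁻¹ * x ^ (1+ε) - Real.log x * ((1+ε) * x ^ (1+ε-1))) / (x ^ (1+ε))^2) x := by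
    intro x hx
    exact (Real.hasDerivAt_log hx.ne').div
      (Real.hasDerivAt_rpow_const (Or.inl hx.ne')) (Real.rpow_pos_of_pos hx _).ne'
  apply antitoneOn_of_deriv_nonpos (convex_Ici 3)
  · intro x hx
    have hx0 : (0:ℝ) < x := lt_of_lt_of_le (by norm_num) hx
    exact (hd x hx0).continuousAt.continuousWithinAt
  · intro x hx
    rw [interior_Ici] at hx
    have hx0 : (0:ℝ) < x := lt_of_lt_of_le (by norm_num) (le_of_lt hx)
    exact ((hd x hx0).differentiableAt).differentiableWithinAt
  · intro x hx
    rw [interior_Ici] at hx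
    have hx3 : (3:ℝ) < x := hx
    have hx0 : (0:ℝ) < x := by linarith
    rw [(hd x hx0).deriv]
    have hxe : (0:ℝ) < x ^ ε := Real.rpow_pos_of_pos hx0 ε
    have hx1e : (0:ℝ) < x ^ (1+ε) := Real.rpow_pos_of_pos hx0 _
    have e1 : x ^ (1+ε) = x * x ^ ε := by rw [Real.rpow_add hx0, Real.rpow_one]
    have e2 : x ^ (1+ε-1) = x ^ ε := by norm_num
    have hlog : 1 < Real.log x := by
      rw [Real.lt_log_iff_exp_lt hx0]
      have := Real.exp_one_lt_d9
      linarith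
    apply div_nonpos_of_nonpos_of_nonneg _ (by positivity)
    rw [e1, e2]
    have : x⁻¹ * (x * x ^ ε) = x ^ ε := by field_simp
    rw [this]
    have h : 1 < (1+ε) * Real.log x := by nlinarith
    nlinarith [mul_pos hxe (sub_pos.mpr h)]

lemma Fz_step {ε : ℝ} (hε : 0 < ε) {a : ℝ} (ha : 3 ≤ a) :
    Real.log (a+1) / (a+1) ^ (1+ε) ≤ Fz ε (a+1) - Fz ε a ∧
    Fz ε (a+1) - Fz ε a ≤ Real.log a / a ^ (1+ε) := by
  have ha0 : (0:ℝ) < a := by linarith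
  obtain ⟨c, hc, hceq⟩ := exists_hasDerivAt_eq_slope (Fz ε)
      (fun x => Real.log x / x ^ (1+ε)) (by linarith : a < a+1)
      (fun x hx => (hasDerivAt_Fz hε (by simp at hx; linarith [hx.1] : (0:ℝ) < x)).continuousAt.continuousWithinAt)
      (fun x hx => hasDerivAt_Fz hε (by linarith [hx.1] : (0:ℝ) < x))
  have hc1 : (3:ℝ) ≤ c := by linarith [hc.1]
  have hslope : Fz ε (a+1) - Fz ε a = Real.log c / c ^ (1+ε) := by
    rw [hceq]; simp
  rw [hslope]
  constructor
  · exact fz_anti hε (Set.mem_Ici.mpr hc1) (Set.mem_Ici.mpr (by linarith)) (le_of_lt hc.2)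
  · exact fz_anti hε (Set.mem_Ici.mpr ha) (Set.mem_Ici.mpr hc1) (le_of_lt hc.1)

lemma Fz_sums {ε : ℝ} (hε : 0 < ε) {k : ℕ} (hk : 3 ≤ k) :
    Fz ε ((k:ℝ)+1) - Fz ε 3 ≤ ∑ i ∈ Finset.Ioc 2 k, Real.log i / (i:ℝ) ^ (1+ε) ∧
    ∑ i ∈ Finset.Ioc 3 k, Real.log i / (i:ℝ) ^ (1+ε) ≤ Fz ε (k:ℝ) - Fz ε 3 := by
  induction k, hk using Nat.le_induction with
  | base =>
      constructor
      · have := (Fz_step hε (le_refl (3:ℝ))).2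
        norm_num at this ⊢
        convert this using 3
      · norm_num
  | succ k hk3 ih =>
      have hkc : (3:ℝ) ≤ (k:ℝ) := by exact_mod_cast hk3
      constructor
      · rw [Finset.sum_Ioc_succ_top (by omega)]
        have h1 := (Fz_step hε (by linarith : (3:ℝ) ≤ (k:ℝ)+1)).2
        push_cast
        have h2 := ih.1
        push_cast at h2 ⊢
        linarith
      · rw [Finset.sum_Ioc_succ_top (by omega)]
        have h1 := (Fz_step hε hkc).1
        have h2 := ih.2
        push_cast at h1 h2 ⊢
        linarith


/-- Bounds on the cross-entropy `H(P_{M_k}, P_M)` of top-`k` sampling under a Zipf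
distribution with exponent `s = 1 + ε`, `1 < s ≤ 1/ln 2` (Theorem 2 of the paper). -/
theorem zipf_topk_cross_entropy_bounds (s : ℝ) (hs1 : 1 < s) (hs2 : s ≤ 1 / Real.log 2)
    (ε : ℝ) (hε : ε = s - 1)
    (N k : ℕ) (hk : 3 ≤ k) (hkN : k ≤ N)
    (HN : ℝ) (hHN : HN = ∑ i ∈ Finset.Icc 1 N, 1 / (i : ℝ) ^ s)
    (Hk : ℝ) (hHk : Hk = ∑ i ∈ Finset.Icc 1 k, 1 / (i : ℝ) ^ s)
    (pM : ℕ → ℝ) (hpM : ∀ i ∈ Finset.Icc 1 N, pM i = 1 / ((i : ℝ) ^ s * HN))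
    (pMk : ℕ → ℝ) (hpMk : ∀ i ∈ Finset.Icc 1 k, pMk i = 1 / ((i : ℝ) ^ s * Hk))
    (CE : ℝ) (hCE : CE = -(∑ i ∈ Finset.Icc 1 k, pMk i * Real.logb 2 (pM i)))
    (a₁ a₂ b₁ b₂ : ℝ)
    (ha₁ : a₁ = s * (Real.logb 2 2 / (2 : ℝ) ^ (1 + ε)
        + (1 / (ε * Real.log 2 * (3 : ℝ) ^ ε)) * (Real.log 3 + 1 / ε)))
    (ha₂ : a₂ = s / (ε * Real.log 2))
    (hb₁ : b₁ = s * (Real.logb 2 2 / (2 : ℝ) ^ (1 + ε) + Real.logb 2 3 / (3 : ℝ) ^ (1 + ε)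
        + (1 / (ε * Real.log 2 * (3 : ℝ) ^ ε)) * (Real.log 3 + 1 / ε)))
    (hb₂ : b₂ = s / (ε * Real.log 2)) :
    a₁ / Hk - (a₂ / (Hk * ((k : ℝ) + 1) ^ ε)) * (Real.log ((k : ℝ) + 1) + 1 / ε)
      ≤ CE - Real.logb 2 HN ∧
    CE - Real.logb 2 HN
      ≤ b₁ / Hk - (b₂ / (Hk * (k : ℝ) ^ ε)) * (Real.log k + 1 / ε) := by
  have hε0 : 0 < ε := by rw [hε]; linarith
  have hs' : s = 1 + ε := by rw [hε]; ring
  have hlog2 : (0:ℝ) < Real.log 2 := Real.log_pos (by norm_num)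
  have hpos : ∀ (m : ℕ), 1 ≤ m → (0:ℝ) < ∑ i ∈ Finset.Icc 1 m, 1 / (i : ℝ) ^ s := by
    intro m hm
    apply Finset.sum_pos
    · intro i hi
      have h1 : 1 ≤ i := (Finset.mem_Icc.mp hi).1
      have : (0:ℝ) < (i:ℝ) := by exact_mod_cast h1
      positivity
    · exact ⟨1, Finset.mem_Icc.mpr ⟨le_refl 1, hm⟩⟩
  have hHk0 : 0 < Hk := hHk ▸ hpos k (by omega)
  have hHN0 : 0 < HN := hHN ▸ hpos N (by omega)
  -- rewrite CE
  set T : ℝ := ∑ i ∈ Finset.Icc 1 k, Real.log i / (i:ℝ) ^ s with hT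
  have key1 : CE - Real.logb 2 HN = (s / (Hk * Real.log 2)) * T := by
    have sum_eq : ∀ i ∈ Finset.Icc 1 k, pMk i * Real.logb 2 (pM i)
        = -((s/(Hk*Real.log 2)) * (Real.log i / (i:ℝ)^s)
            + (Real.logb 2 HN / Hk) * (1/(i:ℝ)^s)) := by
      intro i hi
      have h1 : 1 ≤ i := (Finset.mem_Icc.mp hi).1
      have hik : i ≤ k := (Finset.mem_Icc.mp hi).2
      have hiN : i ∈ Finset.Icc 1 N := Finset.mem_Icc.mpr ⟨h1, le_trans hik hkN⟩
      have hi0 : (0:ℝ) < (i:ℝ) := by exact_mod_cast h1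
      have hips : (0:ℝ) < (i:ℝ)^s := Real.rpow_pos_of_pos hi0 s
      rw [hpMk i hi, hpM i hiN, Real.logb, Real.log_div one_ne_zero (by positivity),
        Real.log_one, Real.log_mul hips.ne' hHN0.ne', Real.log_rpow hi0, Real.logb]
      field_simp
      ring
    rw [hCE, Finset.sum_congr rfl sum_eq, Finset.sum_neg_distrib, Finset.sum_add_distrib,
      ← Finset.mul_sum, ← Finset.mul_sum, ← hHk]
    have : Real.logb 2 HN / Hk * Hk = Real.logb 2 HN := by field_simp
    rw [this]
    ring
  -- split T
  have hsplit : T = Real.log 2 / (2:ℝ)^s + ∑ i ∈ Finset.Ioc 2 k, Real.log i / (i:ℝ)^s := by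
    have h0 : Finset.Icc 1 k = Finset.Ioc 0 k := by
      rw [← Finset.Icc_add_one_left_eq_Ioc]; rfl
    have h1 : ∑ i ∈ Finset.Ioc (0:ℕ) 2, Real.log i / (i:ℝ)^s
        + ∑ i ∈ Finset.Ioc 2 k, Real.log i / (i:ℝ)^s
        = ∑ i ∈ Finset.Ioc 0 k, Real.log i / (i:ℝ)^s :=
      Finset.sum_Ioc_consecutive _ (by omega) (by omega)
    have h2 : ∑ i ∈ Finset.Ioc (0:ℕ) 2, Real.log i / (i:ℝ)^s = Real.log 2 / (2:ℝ)^s := by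
      rw [show Finset.Ioc (0:ℕ) 2 = {1, 2} by decide]
      norm_num
    rw [hT, h0, ← h1, h2]
  have hsplit2 : ∑ i ∈ Finset.Ioc 2 k, Real.log i / (i:ℝ)^s
      = Real.log 3 / (3:ℝ)^s + ∑ i ∈ Finset.Ioc 3 k, Real.log i / (i:ℝ)^s := by
    have h1 : ∑ i ∈ Finset.Ioc (2:ℕ) 3, Real.log i / (i:ℝ)^s
        + ∑ i ∈ Finset.Ioc 3 k, Real.log i / (i:ℝ)^s
        = ∑ i ∈ Finset.Ioc 2 k, Real.log i / (i:ℝ)^s :=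
      Finset.sum_Ioc_consecutive _ (by omega) (by omega)
    have h2 : ∑ i ∈ Finset.Ioc (2:ℕ) 3, Real.log i / (i:ℝ)^s = Real.log 3 / (3:ℝ)^s := by
      rw [show Finset.Ioc (2:ℕ) 3 = {3} by decide]
      norm_num
    rw [← h1, h2]
  have hb := Fz_sums hε0 hk
  simp only [← hs'] at hb
  have hlow : Real.log 2 / (2:ℝ)^s + (Fz ε ((k:ℝ)+1) - Fz ε 3) ≤ T := by
    rw [hsplit]; linarith [hb.1]
  have hup : T ≤ Real.log 2 / (2:ℝ)^s + Real.log 3 / (3:ℝ)^s + (Fz ε (k:ℝ) - Fz ε 3) := by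
    rw [hsplit, hsplit2]; linarith [hb.2]
  have hcoef : (0:ℝ) < s / (Hk * Real.log 2) := by positivity
  have h2e : ((2:ℝ)) ^ (1+ε) ≠ 0 := (Real.rpow_pos_of_pos (by norm_num) _).ne'
  have h3e : ((3:ℝ)) ^ ε ≠ 0 := (Real.rpow_pos_of_pos (by norm_num) _).ne'
  have h3e1 : ((3:ℝ)) ^ (1+ε) ≠ 0 := (Real.rpow_pos_of_pos (by norm_num) _).ne'
  have hk1e : (((k:ℝ))+1) ^ ε ≠ 0 :=
    (Real.rpow_pos_of_pos (by positivity) _).ne'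
  have hk0 : (0:ℝ) < (k:ℝ) := by exact_mod_cast (by omega : 0 < k)
  have hke : ((k:ℝ)) ^ ε ≠ 0 := (Real.rpow_pos_of_pos hk0 _).ne'
  constructor
  · have hid : a₁ / Hk - (a₂ / (Hk * ((k : ℝ) + 1) ^ ε)) * (Real.log ((k : ℝ) + 1) + 1 / ε)
        = (s / (Hk * Real.log 2)) * (Real.log 2 / (2:ℝ)^s + (Fz ε ((k:ℝ)+1) - Fz ε 3)) := by
      rw [ha₁, ha₂, hs', Real.logb_self_eq_one (by norm_num)]
      simp only [Fz]
      field_simp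
      ring
    rw [key1, hid]
    exact mul_le_mul_of_nonneg_left hlow hcoef.le
  · have hid : b₁ / Hk - (b₂ / (Hk * (k : ℝ) ^ ε)) * (Real.log (k:ℝ) + 1 / ε)
        = (s / (Hk * Real.log 2)) * (Real.log 2 / (2:ℝ)^s + Real.log 3 / (3:ℝ)^s
            + (Fz ε (k:ℝ) - Fz ε 3)) := by
      rw [hb₁, hb₂, hs', Real.logb_self_eq_one (by norm_num), Real.logb]
      simp only [Fz]
      field_simp
      ring
    rw [key1, hid]
    exact mul_le_mul_of_nonneg_left hup hcoef.le
end
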